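/- arXiv:1805.10239 — 3 statements merged into one kernel-verified Lean document; each statement's English description precedes it below -/
import Mathlib

section
/- Let G be a finite weighted directed acyclic graph with edge weights in a commutative ring R. For vertices a, b, let P(a,b) be the sum over all directed paths p from a to b of the product of edge weights of p. For k-tuples a = (a₁,…,a_k), b = (b₁,…,b_k) of vertices, let P_k(a,b) be the sum of Π_i wt(p_i) over all families (p₁,…,p_k) where p_i is a path from a_i to b_i and the paths are pairwise vertex-disjoint. Then Σ_{σ ∈ S_k} sgn(σ) P_k(a, b_σ) = det(P(a_i, b_j))_{i,j=1}^k, where b_σ = (b_{σ(1)},…,b_{σ(k)}). -/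
/-- `IsWalk src tgt l a b` means the list of edges `l` forms a directed walk from `a` to `b`. -/
def IsWalk {V E : Type*} (src tgt : E → V) : List E → V → V → Prop
  | [], a, b => a = b
  | e :: l, a, b => src e = a ∧ IsWalk src tgt l (tgt e) b

/-- The list of vertices visited by a walk starting at `a` with edge list `l`. -/
def walkVerts {V E : Type*} (tgt : E → V) (a : V) (l : List E) : List V :=
  a :: l.map tgt

/-- The weight of a walk: the product of the weights of its edges. -/
def walkWt {E R : Type*} [CommRing R] (wt : E → R) (l : List E) : R :=
  (l.map wt).prod

/-- A directed path from `a` to `b`: a walk with no repeated vertices. -/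
def DPath {V E : Type*} (src tgt : E → V) (a b : V) : Type _ :=
  {l : List E // IsWalk src tgt l a b ∧ (walkVerts tgt a l).Nodup}

/-- `P(a,b)`: the sum of the weights of all directed paths from `a` to `b`. -/
noncomputable def pathSum {V E R : Type*} [CommRing R] (src tgt : E → V) (wt : E → R)
    (a b : V) : R :=
  ∑ᶠ p : DPath src tgt a b, walkWt wt p.1

/-- Families of `k` pairwise vertex-disjoint paths `p i : a i → b i`. -/
def DisjPathFamily {V E : Type*} (src tgt : E → V) {k : ℕ} (a b : Fin k → V) : Type _ :=
  {p : (i : Fin k) → DPath src tgt (a i) (b i) //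
    ∀ i j : Fin k, i ≠ j → ∀ v, v ∈ walkVerts tgt (a i) (p i).1 →
      v ∉ walkVerts tgt (a j) (p j).1}

/-- `P_k(a,b)`: the sum of the weights of all families of pairwise vertex-disjoint paths. -/
noncomputable def pathFamilySum {V E R : Type*} [CommRing R] (src tgt : E → V) (wt : E → R)
    {k : ℕ} (a b : Fin k → V) : R :=
  ∑ᶠ p : DisjPathFamily src tgt a b, ∏ i : Fin k, walkWt wt ((p.1 i).1)

/-!
Expand the determinant as a signed sum over pairs `(σ, p)` of a permutation and a family of
paths `p i : a i → b (σ i)`. The families of pairwise disjoint paths give the left-hand side; the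
others cancel in pairs. For such a family pick a vertex `v` on at least two paths, let `i < j` be
the two smallest indices of paths through `v`, and exchange the tails of paths `i` and `j` after
`v`. This multiplies the sign of `σ` by `-1` and keeps the weight and the multiset of visited
vertices, so the same `v`, `i`, `j` are picked again and the operation is an involution;
acyclicity makes the new walks paths again.
-/

open Finset

section SwapTwoSmallest

variable {ι : Type*} [LinearOrder ι] {s : Finset ι}

def swapTwoSmallest (s : Finset ι) (hs : s.Nontrivial) : Equiv.Perm ι :=
  Equiv.swap (s.min' hs.nonempty) ((s.erase (s.min' hs.nonempty)).min' hs.erase_nonempty)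

lemma sign_swapTwoSmallest [Fintype ι] (hs : s.Nontrivial) :
    Equiv.Perm.sign (swapTwoSmallest s hs) = -1 :=
  Equiv.Perm.sign_swap (Finset.ne_of_mem_erase (Finset.min'_mem _ _)).symm

lemma mem_of_swapTwoSmallest_apply_ne (hs : s.Nontrivial) {m : ι}
    (h : swapTwoSmallest s hs m ≠ m) : m ∈ s := by
  by_contra hm
  refine h (Equiv.swap_apply_of_ne_of_ne ?_ ?_)
  · exact fun h' => hm (h' ▸ Finset.min'_mem _ _)
  · exact fun h' => hm (h' ▸ Finset.mem_of_mem_erase (Finset.min'_mem _ _))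

lemma swapTwoSmallest_inv (hs : s.Nontrivial) :
    (swapTwoSmallest s hs)⁻¹ = swapTwoSmallest s hs :=
  Equiv.swap_inv _ _

end SwapTwoSmallest

section

variable {V E : Type*} {src tgt : E → V}

section Walks

@[simp] lemma isWalk_nil {a b : V} : IsWalk src tgt [] a b ↔ a = b := Iff.rfl

@[simp] lemma isWalk_cons {e : E} {l : List E} {a b : V} :
    IsWalk src tgt (e :: l) a b ↔ src e = a ∧ IsWalk src tgt l (tgt e) b := Iff.rfl

@[simp] lemma walkVerts_nil (a : V) : walkVerts tgt a [] = [a] := rfl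

@[simp] lemma walkVerts_cons (a : V) (e : E) (l : List E) :
    walkVerts tgt a (e :: l) = a :: walkVerts tgt (tgt e) l := rfl

lemma walkVerts_append (a : V) (l r : List E) :
    walkVerts tgt a (l ++ r) = walkVerts tgt a l ++ r.map tgt := by
  simp [walkVerts]

lemma walkWt_append {R : Type*} [CommRing R] (wt : E → R) (l r : List E) :
    walkWt wt (l ++ r) = walkWt wt l * walkWt wt r := by
  simp [walkWt]

lemma IsWalk.append {l r : List E} {a c b : V} (hl : IsWalk src tgt l a c)
    (hr : IsWalk src tgt r c b) : IsWalk src tgt (l ++ r) a b := by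
  induction l generalizing a with
  | nil => rwa [isWalk_nil.1 hl]
  | cons e l ih => exact ⟨hl.1, ih hl.2⟩

lemma IsWalk.mem_walkVerts {l : List E} {a b : V} (h : IsWalk src tgt l a b) :
    b ∈ walkVerts tgt a l := by
  induction l generalizing a with
  | nil => simp [isWalk_nil.1 h]
  | cons e l ih => exact List.mem_cons_of_mem _ (ih h.2)

variable [DecidableEq V]

def walkTakeUntil (tgt : E → V) (v : V) : V → List E → List E
  | _, [] => []
  | a, e :: l => if a = v then [] else e :: walkTakeUntil tgt v (tgt e) l

def walkDropUntil (tgt : E → V) (v : V) : V → List E → List E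
  | _, [] => []
  | a, e :: l => if a = v then e :: l else walkDropUntil tgt v (tgt e) l

@[simp] lemma walkTakeUntil_self (v : V) (l : List E) : walkTakeUntil tgt v v l = [] := by
  cases l <;> simp [walkTakeUntil]

@[simp] lemma walkDropUntil_self (v : V) (l : List E) : walkDropUntil tgt v v l = l := by
  cases l <;> simp [walkDropUntil]

@[simp] lemma walkTakeUntil_append_walkDropUntil (v a : V) (l : List E) :
    walkTakeUntil tgt v a l ++ walkDropUntil tgt v a l = l := by
  induction l generalizing a with
  | nil => rfl
  | cons e l ih => by_cases h : a = v <;> simp [walkTakeUntil, walkDropUntil, h, ih]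

lemma walkTakeUntil_append_of_mem {v a : V} {l : List E} (hv : v ∈ walkVerts tgt a l)
    (r : List E) :
    walkTakeUntil tgt v a (walkTakeUntil tgt v a l ++ r) = walkTakeUntil tgt v a l := by
  induction l generalizing a with
  | nil => simp_all
  | cons e l ih =>
    by_cases h : a = v
    · simp [h]
    · simp_all [walkTakeUntil, Ne.symm h]

lemma walkDropUntil_append_of_mem {v a : V} {l : List E} (hv : v ∈ walkVerts tgt a l)
    (r : List E) : walkDropUntil tgt v a (walkTakeUntil tgt v a l ++ r) = r := by
  induction l generalizing a with
  | nil => simp_all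
  | cons e l ih =>
    by_cases h : a = v
    · simp [h]
    · simp_all [walkTakeUntil, walkDropUntil, Ne.symm h]

lemma IsWalk.takeUntil {l : List E} {a b v : V} (h : IsWalk src tgt l a b)
    (hv : v ∈ walkVerts tgt a l) : IsWalk src tgt (walkTakeUntil tgt v a l) a v := by
  induction l generalizing a with
  | nil => simp_all [walkTakeUntil]
  | cons e l ih =>
    by_cases hav : a = v
    · simp [hav]
    · simp_all [walkTakeUntil, Ne.symm hav]

lemma IsWalk.dropUntil {l : List E} {a b v : V} (h : IsWalk src tgt l a b)
    (hv : v ∈ walkVerts tgt a l) : IsWalk src tgt (walkDropUntil tgt v a l) v b := by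
  induction l generalizing a with
  | nil => simp_all [walkDropUntil]
  | cons e l ih =>
    by_cases hav : a = v
    · simp_all
    · simp_all [walkDropUntil, Ne.symm hav]

lemma IsWalk.nodup (hacyclic : ∀ (a : V) (l : List E), IsWalk src tgt l a a → l = [])
    {l : List E} {a b : V} (h : IsWalk src tgt l a b) : (walkVerts tgt a l).Nodup := by
  induction l generalizing a with
  | nil => simp
  | cons e l ih =>
    refine List.nodup_cons.2 ⟨fun ha => ?_, ih h.2⟩
    -- a return to `a` would close a cycle through `e`
    have := hacyclic a (e :: walkTakeUntil tgt a (tgt e) l) ⟨h.1, h.2.takeUntil ha⟩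
    exact List.cons_ne_nil _ _ this

end Walks

noncomputable instance [Fintype E] (a b : V) : Fintype (DPath src tgt a b) :=
  Fintype.ofInjective
    (fun p : DPath src tgt a b => (⟨p.1, (List.nodup_cons.1 p.2.2).2.of_map tgt⟩ :
      {l : List E // l.Nodup}))
    fun _ _ h => Subtype.ext (congrArg Subtype.val h :)

variable {k : ℕ}

variable (src tgt) in
/-- The terms of the fully expanded determinant `det (P(a i, b j))`. -/
abbrev PathSystem (a b : Fin k → V) : Type _ :=
  Σ σ : Equiv.Perm (Fin k), ∀ m, DPath src tgt (a m) (b (σ m))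

namespace PathSystem

variable {a b : Fin k → V}

def verts (x : PathSystem src tgt a b) (m : Fin k) : List V := walkVerts tgt (a m) (x.2 m).1

def weight {R : Type*} [CommRing R] (wt : E → R) (x : PathSystem src tgt a b) : R :=
  ∏ m, walkWt wt (x.2 m).1

def Intersecting (x : PathSystem src tgt a b) : Prop :=
  ∃ m n, m ≠ n ∧ ∃ u ∈ x.verts m, u ∈ x.verts n

def vertexMultiset (x : PathSystem src tgt a b) : Multiset V := ∑ m, (x.verts m : Multiset V)

lemma ext {x y : PathSystem src tgt a b} (h₁ : x.1 = y.1) (h₂ : ∀ m, (x.2 m).1 = (y.2 m).1) :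
    x = y := by
  obtain ⟨σ, p⟩ := x
  obtain ⟨τ, q⟩ := y
  obtain rfl : σ = τ := h₁
  exact Sigma.ext rfl (heq_of_eq (funext fun m => Subtype.ext (h₂ m)))

lemma not_intersecting_mk_iff {σ : Equiv.Perm (Fin k)}
    {p : ∀ m, DPath src tgt (a m) (b (σ m))} :
    ¬ Intersecting (⟨σ, p⟩ : PathSystem src tgt a b) ↔
      ∀ i j : Fin k, i ≠ j → ∀ v, v ∈ walkVerts tgt (a i) (p i).1 →
        v ∉ walkVerts tgt (a j) (p j).1 := by
  simp [Intersecting, verts]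

section Involution

variable [DecidableEq V]

def visitors (x : PathSystem src tgt a b) (u : V) : Finset (Fin k) := {m | u ∈ x.verts m}

lemma count_vertexMultiset (x : PathSystem src tgt a b) (u : V) :
    x.vertexMultiset.count u = #(x.visitors u) := by
  rw [vertexMultiset, Multiset.count_sum', visitors, Finset.card_filter]
  refine Finset.sum_congr rfl fun m _ => ?_
  split_ifs with h
  · exact Multiset.count_eq_one_of_mem (x.2 m).2.2 h
  · exact Multiset.count_eq_zero_of_notMem h

lemma intersecting_iff_exists_one_lt_count {x : PathSystem src tgt a b} :
    x.Intersecting ↔ ∃ u, 1 < x.vertexMultiset.count u := by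
  simp only [count_vertexMultiset, Finset.one_lt_card, visitors, Finset.mem_filter,
    Finset.mem_univ, true_and, Intersecting]
  grind

def rerouteList (x : PathSystem src tgt a b) (τ : Equiv.Perm (Fin k)) (v : V) (m : Fin k) :
    List E :=
  walkTakeUntil tgt v (a m) (x.2 m).1 ++ walkDropUntil tgt v (a (τ m)) (x.2 (τ m)).1

section Reroute

variable (hacyclic : ∀ (a : V) (l : List E), IsWalk src tgt l a a → l = [])
variable {x : PathSystem src tgt a b} {τ : Equiv.Perm (Fin k)} {v : V}

lemma rerouteList_of_apply_eq {m : Fin k} (h : τ m = m) : x.rerouteList τ v m = (x.2 m).1 := by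
  rw [rerouteList, h, walkTakeUntil_append_walkDropUntil]

lemma isWalk_rerouteList (hv : ∀ m, τ m ≠ m → v ∈ x.verts m) (m : Fin k) :
    IsWalk src tgt (x.rerouteList τ v m) (a m) (b ((x.1 * τ) m)) := by
  by_cases h : τ m = m
  · rw [rerouteList_of_apply_eq h, Equiv.Perm.mul_apply, h]
    exact (x.2 m).2.1
  · have h' : τ (τ m) ≠ τ m := fun h' => h (τ.injective h')
    exact ((x.2 m).2.1.takeUntil (hv m h)).append ((x.2 (τ m)).2.1.dropUntil (hv _ h'))

variable (x τ v) in
/-- When `v` does not lie on every path moved by `τ`, the junk value `x` keeps the definition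
free of proof arguments. -/
def reroute : PathSystem src tgt a b :=
  if hv : ∀ m, τ m ≠ m → v ∈ x.verts m then
    ⟨x.1 * τ, fun m => ⟨x.rerouteList τ v m, isWalk_rerouteList hv m,
      (isWalk_rerouteList hv m).nodup hacyclic⟩⟩
  else x

variable (hv : ∀ m, τ m ≠ m → v ∈ x.verts m)
include hv

lemma reroute_fst : (x.reroute hacyclic τ v).1 = x.1 * τ := by
  rw [reroute, dif_pos hv]

lemma reroute_snd (m : Fin k) : ((x.reroute hacyclic τ v).2 m).1 = x.rerouteList τ v m := by
  rw [reroute, dif_pos hv]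

lemma mem_verts_reroute (m : Fin k) :
    v ∈ (x.reroute hacyclic τ v).verts m ↔ v ∈ x.verts m := by
  rw [verts, reroute_snd hacyclic hv]
  by_cases h : τ m = m
  · rw [rerouteList_of_apply_eq h, verts]
  · refine iff_of_true ?_ (hv m h)
    rw [rerouteList, walkVerts_append]
    exact List.mem_append_left _ ((x.2 m).2.1.takeUntil (hv m h)).mem_walkVerts

lemma weight_reroute {R : Type*} [CommRing R] (wt : E → R) :
    (x.reroute hacyclic τ v).weight wt = x.weight wt := by
  simp only [weight, reroute_snd hacyclic hv, rerouteList, walkWt_append,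
    Finset.prod_mul_distrib]
  rw [Equiv.prod_comp τ (fun m => walkWt wt (walkDropUntil tgt v (a m) (x.2 m).1)),
    ← Finset.prod_mul_distrib]
  simp only [← walkWt_append, walkTakeUntil_append_walkDropUntil]

lemma vertexMultiset_reroute : (x.reroute hacyclic τ v).vertexMultiset = x.vertexMultiset := by
  simp only [vertexMultiset, verts, reroute_snd hacyclic hv, rerouteList, walkVerts_append,
    ← Multiset.coe_add, Finset.sum_add_distrib]
  rw [Equiv.sum_comp τ (fun m => ((walkDropUntil tgt v (a m) (x.2 m).1).map tgt : Multiset V)),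
    ← Finset.sum_add_distrib]
  simp only [Multiset.coe_add, ← walkVerts_append, walkTakeUntil_append_walkDropUntil]

lemma reroute_reroute_inv : (x.reroute hacyclic τ v).reroute hacyclic τ⁻¹ v = x := by
  have hv' : ∀ m, τ⁻¹ m ≠ m → v ∈ (x.reroute hacyclic τ v).verts m := fun m h =>
    (mem_verts_reroute hacyclic hv m).2 (hv m fun h' => h (Equiv.Perm.inv_eq_iff_eq.2 h'.symm))
  refine ext (by simp [reroute_fst hacyclic hv, reroute_fst hacyclic hv']) fun m => ?_
  rw [reroute_snd hacyclic hv', rerouteList]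
  by_cases h : τ m = m
  · have h' : τ⁻¹ m = m := Equiv.Perm.inv_eq_iff_eq.2 h.symm
    simp only [h', reroute_snd hacyclic hv, rerouteList_of_apply_eq h,
      walkTakeUntil_append_walkDropUntil]
  · have hm : τ (τ⁻¹ m) = m := τ.apply_symm_apply m
    have h' : τ (τ⁻¹ m) ≠ τ⁻¹ m := by
      rw [hm]; exact fun h' => h (Equiv.Perm.eq_inv_iff_eq.1 h')
    rw [reroute_snd hacyclic hv, reroute_snd hacyclic hv, rerouteList, rerouteList,
      walkTakeUntil_append_of_mem (hv m h), walkDropUntil_append_of_mem (hv _ h'), hm,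
      walkTakeUntil_append_walkDropUntil]

end Reroute

section Switch

variable {x : PathSystem src tgt a b}

/-- Depends on `x` only through `x.vertexMultiset`, which rerouting preserves. -/
noncomputable def pivot (x : PathSystem src tgt a b) (hx : x.Intersecting) : V :=
  (intersecting_iff_exists_one_lt_count.1 hx).choose

lemma nontrivial_visitors_pivot (hx : x.Intersecting) : (x.visitors (x.pivot hx)).Nontrivial := by
  rw [← Finset.one_lt_card_iff_nontrivial, ← count_vertexMultiset]
  exact (intersecting_iff_exists_one_lt_count.1 hx).choose_spec

lemma pivot_congr {y : PathSystem src tgt a b} (h : y.vertexMultiset = x.vertexMultiset)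
    (hx : x.Intersecting) (hy : y.Intersecting) : y.pivot hy = x.pivot hx := by
  simp only [pivot, h]

noncomputable def pivotSwap (x : PathSystem src tgt a b) (hx : x.Intersecting) :
    Equiv.Perm (Fin k) :=
  swapTwoSmallest (x.visitors (x.pivot hx)) (nontrivial_visitors_pivot hx)

lemma pivot_mem_verts (hx : x.Intersecting) (m : Fin k) (h : x.pivotSwap hx m ≠ m) :
    x.pivot hx ∈ x.verts m := by
  simpa [visitors] using mem_of_swapTwoSmallest_apply_ne _ h

variable (hacyclic : ∀ (a : V) (l : List E), IsWalk src tgt l a a → l = [])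

variable (x) in
noncomputable def switch (hx : x.Intersecting) : PathSystem src tgt a b :=
  x.reroute hacyclic (x.pivotSwap hx) (x.pivot hx)

lemma sign_switch (hx : x.Intersecting) :
    Equiv.Perm.sign (x.switch hacyclic hx).1 = -Equiv.Perm.sign x.1 := by
  rw [switch, reroute_fst hacyclic (pivot_mem_verts hx), Equiv.Perm.sign_mul, pivotSwap,
    sign_swapTwoSmallest, mul_neg_one]

lemma weight_switch {R : Type*} [CommRing R] (wt : E → R) (hx : x.Intersecting) :
    (x.switch hacyclic hx).weight wt = x.weight wt :=
  weight_reroute hacyclic (pivot_mem_verts hx) wt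

lemma vertexMultiset_switch (hx : x.Intersecting) :
    (x.switch hacyclic hx).vertexMultiset = x.vertexMultiset :=
  vertexMultiset_reroute hacyclic (pivot_mem_verts hx)

lemma intersecting_switch (hx : x.Intersecting) : (x.switch hacyclic hx).Intersecting := by
  rw [intersecting_iff_exists_one_lt_count, vertexMultiset_switch hacyclic hx]
  exact intersecting_iff_exists_one_lt_count.1 hx

lemma switch_switch (hx : x.Intersecting) (hx' : (x.switch hacyclic hx).Intersecting) :
    (x.switch hacyclic hx).switch hacyclic hx' = x := by
  set y := x.switch hacyclic hx
  have hpivot : y.pivot hx' = x.pivot hx := pivot_congr (vertexMultiset_switch hacyclic hx) hx hx'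
  have hvisitors : y.visitors (x.pivot hx) = x.visitors (x.pivot hx) := by
    ext m
    simp only [visitors, Finset.mem_filter, Finset.mem_univ, true_and]
    exact mem_verts_reroute hacyclic (pivot_mem_verts hx) m
  have hswap : y.pivotSwap hx' = (x.pivotSwap hx)⁻¹ := by
    simp only [pivotSwap, hpivot, hvisitors, swapTwoSmallest_inv]
  rw [switch, hswap, hpivot]
  exact reroute_reroute_inv hacyclic (pivot_mem_verts hx)

end Switch

end Involution

section Sums

variable [Fintype E] {R : Type*} [CommRing R] (wt : E → R)

lemma det_pathSum :
    (Matrix.of fun i j : Fin k => pathSum src tgt wt (a i) (b j)).det =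
      ∑ x : PathSystem src tgt a b, (Equiv.Perm.sign x.1 : ℤ) • x.weight wt := by
  rw [← Matrix.det_transpose, Matrix.det_apply, Fintype.sum_sigma]
  refine Finset.sum_congr rfl fun σ _ => ?_
  simp only [Matrix.transpose_apply, Matrix.of_apply, pathSum, finsum_eq_sum_of_fintype,
    Fintype.prod_sum, weight, Units.smul_def, Finset.smul_sum]

open scoped Classical in
lemma pathFamilySum_comp_eq_sum (σ : Equiv.Perm (Fin k)) :
    pathFamilySum src tgt wt a (b ∘ σ) =
      ∑ p : ∀ m, DPath src tgt (a m) (b (σ m))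
        with ¬ Intersecting (⟨σ, p⟩ : PathSystem src tgt a b), weight wt ⟨σ, p⟩ :=
  (finsum_subtype_eq_finsum_cond (f := fun p : ∀ m, DPath src tgt (a m) (b (σ m)) =>
      weight wt ⟨σ, p⟩) _).trans
    (finsum_cond_eq_sum_of_cond_iff _ fun _ => by simp [not_intersecting_mk_iff])

open scoped Classical in
lemma sum_not_intersecting :
    ∑ x : PathSystem src tgt a b with ¬x.Intersecting,
        (Equiv.Perm.sign x.1 : ℤ) • x.weight wt =
      ∑ σ : Equiv.Perm (Fin k),
        (Equiv.Perm.sign σ : ℤ) • pathFamilySum src tgt wt a (b ∘ σ) := by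
  rw [Finset.sum_filter, Fintype.sum_sigma]
  refine Finset.sum_congr rfl fun σ _ => ?_
  rw [pathFamilySum_comp_eq_sum, Finset.smul_sum, Finset.sum_filter]

open scoped Classical in
lemma sum_intersecting_eq_zero
    (hacyclic : ∀ (a : V) (l : List E), IsWalk src tgt l a a → l = []) :
    ∑ x : PathSystem src tgt a b with x.Intersecting,
      (Equiv.Perm.sign x.1 : ℤ) • x.weight wt = 0 := by
  refine Finset.sum_involution (fun x hx => x.switch hacyclic (Finset.mem_filter.1 hx).2)
    (fun x hx => ?_) (fun x hx _ h => ?_) (fun x hx => ?_) (fun x hx => switch_switch ..)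
  · rw [sign_switch, weight_switch, Units.val_neg, neg_smul, add_neg_cancel]
  · exact units_ne_neg_self _ (by rw [← sign_switch hacyclic (Finset.mem_filter.1 hx).2, h])
  · exact Finset.mem_filter.2 ⟨Finset.mem_univ _, intersecting_switch ..⟩

end Sums

end PathSystem

end

theorem lindstrom_general {V E R : Type*} [Fintype E] [CommRing R]
    (src tgt : E → V) (wt : E → R)
    (hacyclic : ∀ (a : V) (l : List E), IsWalk src tgt l a a → l = [])
    (k : ℕ) (a b : Fin k → V) :
    ∑ σ : Equiv.Perm (Fin k),
        (Equiv.Perm.sign σ : ℤ) • pathFamilySum src tgt wt a (b ∘ σ) =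
      Matrix.det (Matrix.of fun i j : Fin k => pathSum src tgt wt (a i) (b j)) := by
  classical
  rw [PathSystem.det_pathSum,
    ← Finset.sum_filter_add_sum_filter_not _ PathSystem.Intersecting,
    PathSystem.sum_intersecting_eq_zero wt hacyclic, zero_add, PathSystem.sum_not_intersecting]

/-- **Lindström's lemma** (Lindström–Gessel–Viennot).  In a finite weighted acyclic
directed graph, `Σ_σ sgn(σ) P_k(a, b_σ) = det (P(a_i, b_j))`. -/
theorem lindstrom {V E R : Type*} [Fintype V] [Fintype E] [CommRing R]
    (src tgt : E → V) (wt : E → R)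
    (hacyclic : ∀ (a : V) (l : List E), IsWalk src tgt l a a → l = [])
    (k : ℕ) (a b : Fin k → V) :
    ∑ σ : Equiv.Perm (Fin k),
        (Equiv.Perm.sign σ : ℤ) • pathFamilySum src tgt wt a (b ∘ σ) =
      Matrix.det (Matrix.of fun i j : Fin k => pathSum src tgt wt (a i) (b j)) :=
  lindstrom_general src tgt wt hacyclic k a b
end

section
/- Let G be a finite weighted undirected graph with a partition of its vertices into boundary vertices ∂V and interior vertices intV, such that every connected component contains a boundary vertex. Let K be the Kirchhoff matrix of G (off-diagonal entry (i,j) is minus the sum of weights of edges between i and j; diagonal entry (i,i) is the sum of weights of all edges incident to i). Then the sum, over all spanning forests of G in which every tree contains exactly one boundary vertex, of the products of their edge weights equals det(K restricted to the rows and columns indexed by intV). -/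
open scoped Classical

/-- `touches ends e u v`: the undirected edge `e` (with endpoint pair `ends e`) joins `u`
and `v`. -/
def touches {V E : Type*} (ends : E → V × V) (e : E) (u v : V) : Prop :=
  ends e = (u, v) ∨ ends e = (v, u)

/-- `Reach ends F u v`: `u` and `v` are joined by a path using only edges in `F`. -/
def Reach {V E : Type*} (ends : E → V × V) (F : Finset E) (u v : V) : Prop :=
  Relation.ReflTransGen (fun x y => ∃ e ∈ F, touches ends e x y) u v

/-- The Kirchhoff matrix: off-diagonal entry `(i,j)` is minus the sum of the weights of
the edges between `i` and `j`; diagonal entry `(i,i)` is the sum of the weights of the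
edges from `i` to other vertices. -/
noncomputable def kirchhoff {V E R : Type*} [Fintype E] [CommRing R]
    (ends : E → V × V) (wt : E → R) : Matrix V V R :=
  fun i j =>
    if i = j then ∑ e ∈ Finset.univ.filter (fun e => ∃ w, w ≠ i ∧ touches ends e i w), wt e
    else -∑ e ∈ Finset.univ.filter (fun e => touches ends e i j), wt e

/-- `F` is a spanning forest in which every tree contains exactly one boundary vertex:
every vertex is joined through `F` to a boundary vertex, no two distinct boundary vertices
are joined through `F`, and `F` has exactly as many edges as there are interior vertices
(which forces acyclicity). -/
def IsSingletonGrove {V E : Type*} [Fintype V] (ends : E → V × V) (isBdry : V → Prop)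
    (F : Finset E) : Prop :=
  (∀ v : V, ∃ w, isBdry w ∧ Reach ends F v w) ∧
  (∀ u w : V, isBdry u → isBdry w → Reach ends F u w → u = w) ∧
  F.card = Fintype.card {v : V // ¬ isBdry v}

namespace MatrixForest

variable {V E R : Type*}

noncomputable def incR [CommRing R] (ends : E → V × V) (e : E) (v : V) : R :=
  if (ends e).1 = (ends e).2 then 0
  else if v = (ends e).1 then 1
  else if v = (ends e).2 then -1 else 0

section IncR
variable [CommRing R] {ends : E → V × V} {e : E} {v : V}

lemma incR_loop (hl : (ends e).1 = (ends e).2) : (incR ends e v : R) = 0 := by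
  simp [incR, hl]

lemma incR_fst (hl : (ends e).1 ≠ (ends e).2) : (incR ends e (ends e).1 : R) = 1 := by
  simp [incR, hl]

lemma incR_snd (hl : (ends e).1 ≠ (ends e).2) : (incR ends e (ends e).2 : R) = -1 := by
  simp [incR, hl, Ne.symm hl]

lemma incR_other (h1 : v ≠ (ends e).1) (h2 : v ≠ (ends e).2) : (incR ends e v : R) = 0 := by
  simp [incR, h1, h2]

lemma incR_ne_zero (h : (incR ends e v : R) ≠ 0) : v = (ends e).1 ∨ v = (ends e).2 := by
  unfold incR at h; split_ifs at h <;> tauto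

lemma incR_mul_self {w : V} (ht : touches ends e v w) (hne : v ≠ w) :
    (incR ends e v : R) * incR ends e v = 1 := by
  rcases ht with h | h
  · have hl : (ends e).1 ≠ (ends e).2 := by rw [h]; simpa using hne
    have : v = (ends e).1 := by rw [h]
    rw [this, incR_fst hl, mul_one]
  · have hl : (ends e).1 ≠ (ends e).2 := by rw [h]; simpa using Ne.symm hne
    have : v = (ends e).2 := by rw [h]
    rw [this, incR_snd hl]; ring

end IncR

lemma kirchhoff_eq_sum [Fintype E] [CommRing R] (ends : E → V × V) (wt : E → R) (i j : V) :
    kirchhoff ends wt i j = ∑ e : E, wt e * (incR ends e i * incR ends e j) := by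
  by_cases hij : i = j
  · subst hij
    have key : ∀ e : E, (incR ends e i : R) * incR ends e i =
        if (∃ w, w ≠ i ∧ touches ends e i w) then 1 else 0 := by
      intro e
      by_cases hl : (ends e).1 = (ends e).2
      · rw [incR_loop hl, if_neg, mul_zero]
        rintro ⟨w, hw, h | h⟩
        · exact hw (by rw [h] at hl; simpa using hl.symm)
        · exact hw (by rw [h] at hl; simpa using hl)
      · by_cases h1 : i = (ends e).1
        · have ht : touches ends e i (ends e).2 := Or.inl (by rw [h1])
          rw [if_pos ⟨(ends e).2, by rw [← h1] at hl; exact fun hh => hl hh.symm, ht⟩]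
          exact incR_mul_self ht (by rw [h1]; exact hl)
        · by_cases h2 : i = (ends e).2
          · have ht : touches ends e i (ends e).1 := Or.inr (by rw [h2])
            rw [if_pos ⟨(ends e).1, by rw [← h2] at hl; exact fun hh => hl hh, ht⟩]
            exact incR_mul_self ht (by rw [h2]; exact fun hh => hl hh.symm)
          · rw [incR_other h1 h2, mul_zero, if_neg]
            rintro ⟨w, hw, h | h⟩
            · exact h1 (by rw [h])
            · exact h2 (by rw [h])
    simp only [kirchhoff, if_pos rfl, eq_self_iff_true, if_true, key, mul_ite, mul_one, mul_zero]
    rw [Finset.sum_filter]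
  · have key : ∀ e : E, (incR ends e i : R) * incR ends e j =
        if touches ends e i j then -1 else 0 := by
      intro e
      by_cases hl : (ends e).1 = (ends e).2
      · rw [incR_loop hl, zero_mul, if_neg]
        rintro (h | h)
        · rw [h] at hl; simp only [] at hl; exact hij hl
        · rw [h] at hl; simp only [] at hl; exact hij hl.symm
      · by_cases h1 : i = (ends e).1
        · by_cases h2 : j = (ends e).2
          · have ht : touches ends e i j := Or.inl (show ends e = (i, j) by rw [h1, h2])
            rw [if_pos ht, h1, h2, incR_fst hl, incR_snd hl, one_mul]
          · have hj1 : j ≠ (ends e).1 := fun hh => hij (h1.trans hh.symm)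
            rw [incR_other hj1 h2, mul_zero, if_neg]
            rintro (h | h)
            · exact h2 (by rw [h])
            · exact hij (h1.trans (by rw [h]))
        · by_cases h2 : i = (ends e).2
          · by_cases h3 : j = (ends e).1
            · have ht : touches ends e i j := Or.inr (show ends e = (j, i) by rw [h3, h2])
              rw [if_pos ht, h2, h3, incR_snd hl, incR_fst hl, mul_one]
            · have hj2 : j ≠ (ends e).2 := fun hh => hij (h2.trans hh.symm)
              rw [incR_other h3 hj2, mul_zero, if_neg]
              rintro (h | h)
              · exact h1 (by rw [h])
              · exact h3 (by rw [h])
          · rw [incR_other h1 h2, zero_mul, if_neg]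
            rintro (h | h)
            · exact h1 (by rw [h])
            · exact h2 (by rw [h])
    simp only [kirchhoff, if_neg hij, key, mul_ite, mul_one, mul_zero]
    rw [Finset.sum_filter, ← Finset.sum_neg_distrib]
    exact Finset.sum_congr rfl fun e _ => by split_ifs <;> ring

/-- Reaching the boundary in at most `n` steps. -/
def reachN (ends : E → V × V) (isBdry : V → Prop) (S : Finset E) : ℕ → V → Prop
  | 0, v => isBdry v
  | (n+1), v => isBdry v ∨ ∃ e ∈ S, ∃ w, touches ends e v w ∧ reachN ends isBdry S n w

lemma exists_reachN {ends : E → V × V} {isBdry : V → Prop} {S : Finset E} {v : V}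
    (h : ∃ w, isBdry w ∧ Reach ends S v w) : ∃ n, reachN ends isBdry S n v := by
  obtain ⟨w, hw, hr⟩ := h
  unfold Reach at hr
  induction hr using Relation.ReflTransGen.head_induction_on with
  | refl => exact ⟨0, hw⟩
  | head hstep _ ih =>
      obtain ⟨n, hn⟩ := ih
      obtain ⟨e, he, ht⟩ := hstep
      exact ⟨n + 1, Or.inr ⟨e, he, _, ht, hn⟩⟩

local notation "ε " σ:arg => ((Equiv.Perm.sign σ : ℤ) : R)

lemma det_prod_expand {m : Type*} [Fintype m] [DecidableEq m] [Fintype E] [CommRing R]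
    (A : Matrix m E R) (B : Matrix E m R) :
    (A * B).det = ∑ p : m → E, (∏ i, B (p i) i) * (A.submatrix id p).det := by
  have h1 : (A * B).det
      = ∑ p : m → E, ∑ σ : Equiv.Perm m, ε σ * ∏ i, A (σ i) (p i) * B (p i) i := by
    simp only [Matrix.det_apply', Matrix.mul_apply, Finset.prod_univ_sum, Finset.mul_sum,
      Fintype.piFinset_univ]
    rw [Finset.sum_comm]
  rw [h1]
  refine Finset.sum_congr rfl fun p _ => ?_
  rw [Matrix.det_apply', Finset.mul_sum]
  refine Finset.sum_congr rfl fun σ _ => ?_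
  simp only [Matrix.submatrix_apply, id_eq]
  rw [Finset.prod_mul_distrib]
  ring

open Finset

lemma det_zero_of_unreached [Fintype V] [Fintype E] [CommRing R] {ends : E → V × V}
    {isBdry : V → Prop} (S : Finset E) (p : {v : V // ¬ isBdry v} → E)
    (hp : ∀ j, p j ∈ S) (v₀ : V) (hv₀ : ∀ w, isBdry w → ¬ Reach ends S v₀ w) :
    (Matrix.of fun i j : {v : V // ¬ isBdry v} => (incR ends (p j) i.1 : R)).det = 0 := by
  have hv₀i : ¬ isBdry v₀ := fun h => hv₀ v₀ h Relation.ReflTransGen.refl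
  set T : Finset {v : V // ¬ isBdry v} := univ.filter (fun u => Reach ends S v₀ u.1) with hT
  have hmem : (⟨v₀, hv₀i⟩ : {v : V // ¬ isBdry v}) ∈ T :=
    mem_filter.2 ⟨mem_univ _, Relation.ReflTransGen.refl⟩
  have hchi : ∀ x : V, ∑ u ∈ T, (if u.1 = x then (1:R) else 0)
      = if ¬ isBdry x ∧ Reach ends S v₀ x then 1 else 0 := by
    intro x
    by_cases hx : ¬ isBdry x ∧ Reach ends S v₀ x
    · rw [if_pos hx, Finset.sum_eq_single (⟨x, hx.1⟩ : {v : V // ¬ isBdry v})]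
      · simp
      · intro u _ hne; rw [if_neg]; exact fun h => hne (Subtype.ext h)
      · intro habs
        exact absurd (mem_filter.2 ⟨mem_univ (⟨x, hx.1⟩ : {v : V // ¬ isBdry v}), hx.2⟩) habs
    · rw [if_neg hx, Finset.sum_eq_zero]
      intro u hu; rw [if_neg]; intro h
      exact hx ⟨h ▸ u.2, h ▸ (mem_filter.1 hu).2⟩
  have hrow : ∀ j : {v : V // ¬ isBdry v}, ∑ u ∈ T, (incR ends (p j) u.1 : R) = 0 := by
    intro j
    by_cases hl : (ends (p j)).1 = (ends (p j)).2
    · rw [Finset.sum_eq_zero]; intro u _; exact incR_loop hl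
    · have hterm : ∀ u : {v : V // ¬ isBdry v}, (incR ends (p j) u.1 : R)
          = (if u.1 = (ends (p j)).1 then 1 else 0) - (if u.1 = (ends (p j)).2 then 1 else 0) := by
        intro u
        by_cases h1 : u.1 = (ends (p j)).1
        · rw [h1, incR_fst hl, if_pos rfl, if_neg hl, sub_zero]
        · by_cases h2 : u.1 = (ends (p j)).2
          · rw [h2, incR_snd hl, if_neg (Ne.symm hl), if_pos rfl, zero_sub]
          · rw [incR_other h1 h2, if_neg h1, if_neg h2, sub_zero]
      have hiff : Reach ends S v₀ (ends (p j)).1 ↔ Reach ends S v₀ (ends (p j)).2 := by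
        constructor
        · intro h; exact h.tail ⟨p j, hp j, Or.inl rfl⟩
        · intro h; exact h.tail ⟨p j, hp j, Or.inr rfl⟩
      simp only [hterm]
      rw [Finset.sum_sub_distrib, hchi, hchi]
      by_cases hr : Reach ends S v₀ (ends (p j)).1
      · have hr2 : Reach ends S v₀ (ends (p j)).2 := hiff.1 hr
        have hb1 : ¬ isBdry (ends (p j)).1 := fun h => hv₀ _ h hr
        have hb2 : ¬ isBdry (ends (p j)).2 := fun h => hv₀ _ h hr2
        rw [if_pos ⟨hb1, hr⟩, if_pos ⟨hb2, hr2⟩, sub_self]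
      · have hr2 : ¬ Reach ends S v₀ (ends (p j)).2 := fun h => hr (hiff.2 h)
        rw [if_neg (fun h => hr h.2), if_neg (fun h => hr2 h.2), sub_self]
  set M : Matrix {v : V // ¬ isBdry v} {v : V // ¬ isBdry v} R :=
    Matrix.of fun i j : {v : V // ¬ isBdry v} => (incR ends (p j) i.1 : R) with hM
  have hsum : (∑ k, (if k ∈ T then (1:R) else 0) • M k) = 0 := by
    funext j
    rw [Finset.sum_apply]
    simp only [Pi.smul_apply, smul_eq_mul, ite_mul, one_mul, zero_mul]
    rw [Finset.sum_ite_mem, Finset.univ_inter]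
    exact hrow j
  have hdet := Matrix.det_updateRow_sum M (⟨v₀, hv₀i⟩ : {v : V // ¬ isBdry v})
    (fun k => if k ∈ T then (1:R) else 0)
  rw [hsum, if_pos hmem, one_smul] at hdet
  rw [← hdet]
  exact Matrix.det_eq_zero_of_row_eq_zero ⟨v₀, hv₀i⟩ (fun j => by rw [Matrix.updateRow_self]; rfl)

theorem grove_aux [Fintype V] [Fintype E] [CommRing R] {ends : E → V × V} {isBdry : V → Prop}
    (S : Finset E) (hcard : S.card = Fintype.card {v : V // ¬ isBdry v})
    (hcond : ∀ v : V, ∃ w, isBdry w ∧ Reach ends S v w) :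
    IsSingletonGrove ends isBdry S ∧
    ∃ σ : {v : V // ¬ isBdry v} ≃ {e : E // e ∈ S},
      (Matrix.of fun i j : {v : V // ¬ isBdry v} => (incR ends ((σ j) : E) i.1 : R)).det *
      (Matrix.of fun i j : {v : V // ¬ isBdry v} => (incR ends ((σ j) : E) i.1 : R)).det = 1 := by
  classical
  have hex : ∀ v : V, ∃ n, reachN ends isBdry S n v := fun v => exists_reachN (hcond v)
  set d : V → ℕ := fun v => Nat.find (hex v) with hd
  have hd_spec : ∀ v, reachN ends isBdry S (d v) v := fun v => Nat.find_spec (hex v)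
  have hd_min : ∀ v n, reachN ends isBdry S n v → d v ≤ n := fun v n h => Nat.find_min' (hex v) h
  have hd_bdry : ∀ v, isBdry v → d v = 0 := fun v h => Nat.le_zero.1 (hd_min v 0 h)
  have hd_zero : ∀ v, d v = 0 → isBdry v := fun v h => by
    have := hd_spec v; rw [h] at this; exact this
  have hdesc : ∀ v, ¬ isBdry v → ∃ e, ∃ w, e ∈ S ∧ touches ends e v w ∧ d w < d v := by
    intro v hv
    have h0 : d v ≠ 0 := fun h => hv (hd_zero v h)
    obtain ⟨k, hk⟩ : ∃ k, d v = k + 1 :=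
      ⟨d v - 1, (Nat.succ_pred_eq_of_pos (Nat.pos_of_ne_zero h0)).symm⟩
    have hs := hd_spec v; rw [hk] at hs
    rcases hs with h | ⟨e, he, w, ht, hw⟩
    · exact absurd h hv
    · exact ⟨e, w, he, ht, lt_of_le_of_lt (hd_min w k hw) (by omega)⟩
  choose edge par hedge_mem hedge_touch hpar_lt using hdesc
  set par' : V → V := fun v => if h : ¬ isBdry v then par v h else v with hpar'
  have hpar'_eq : ∀ v (h : ¬ isBdry v), par' v = par v h := fun v h => dif_pos h
  have hpar'_lt : ∀ v, ¬ isBdry v → d (par' v) < d v := by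
    intro v h; rw [hpar'_eq v h]; exact hpar_lt v h
  have hpar'_bdry : ∀ v, isBdry v → par' v = v := fun v h => dif_neg (not_not_intro h)
  have hiter_bdry : ∀ n v, isBdry v → par'^[n] v = v := by
    intro n
    induction n with
    | zero => intro v _; rfl
    | succ n ih => intro v h; rw [Function.iterate_succ_apply, hpar'_bdry v h]; exact ih v h
  have hstab : ∀ n v, d v ≤ n → par'^[n] v = par'^[d v] v := by
    intro n
    induction n using Nat.strong_induction_on with
    | _ n ih =>
      intro v hv
      by_cases hb : isBdry v
      · rw [hiter_bdry n v hb, hiter_bdry (d v) v hb]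
      · cases n with
        | zero => exact absurd (hd_zero v (Nat.le_zero.1 hv)) hb
        | succ n =>
          have hlt := hpar'_lt v hb
          have h1 : d (par' v) ≤ n := by omega
          obtain ⟨k, hk⟩ : ∃ k, d v = k + 1 := ⟨d v - 1, by omega⟩
          rw [Function.iterate_succ_apply, ih n (Nat.lt_succ_self n) (par' v) h1,
            hk, Function.iterate_succ_apply, ih k (by omega) (par' v) (by omega)]
  have hroot_step : ∀ v (h : ¬ isBdry v), par'^[d v] v = par'^[d (par' v)] (par' v) := by
    intro v hb
    have hlt := hpar'_lt v hb
    obtain ⟨k, hk⟩ : ∃ k, d v = k + 1 := ⟨d v - 1, by omega⟩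
    rw [hk, Function.iterate_succ_apply]
    exact hstab k (par' v) (by omega)
  have hσinj : ∀ (u w : {v : V // ¬ isBdry v}), edge u.1 u.2 = edge w.1 w.2 → u = w := by
    intro u w he
    by_contra hne
    have hne' : u.1 ≠ w.1 := fun h => hne (Subtype.ext h)
    have htu := hedge_touch u.1 u.2
    have htw := hedge_touch w.1 w.2
    have hltu := hpar_lt u.1 u.2
    have hltw := hpar_lt w.1 w.2
    rw [he] at htu
    rcases htu with h1 | h1 <;> rcases htw with h2 | h2 <;>
      (have h12 := h1.symm.trans h2; rw [Prod.mk.injEq] at h12)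
    · exact hne' h12.1
    · have e1 := congrArg d h12.1
      have e2 := congrArg d h12.2
      omega
    · have e1 := congrArg d h12.1
      have e2 := congrArg d h12.2
      omega
    · exact hne' h12.2
  have hcardeq : Fintype.card {v : V // ¬ isBdry v} = Fintype.card {e : E // e ∈ S} := by
    rw [Fintype.card_coe, hcard]
  set σfun : {v : V // ¬ isBdry v} → {e : E // e ∈ S} :=
    fun u => ⟨edge u.1 u.2, hedge_mem u.1 u.2⟩ with hσfun
  have hσfinj : Function.Injective σfun := fun u w h =>
    hσinj u w (congrArg Subtype.val h)
  have hσbij : Function.Bijective σfun :=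
    (Fintype.bijective_iff_injective_and_card σfun).2 ⟨hσfinj, hcardeq⟩
  have hsurj : ∀ e, e ∈ S → ∃ u : {v : V // ¬ isBdry v}, edge u.1 u.2 = e := by
    intro e he
    obtain ⟨u, hu⟩ := hσbij.2 ⟨e, he⟩
    exact ⟨u, congrArg Subtype.val hu⟩
  have hroot_reach : ∀ a b, Reach ends S a b → par'^[d a] a = par'^[d b] b := by
    intro a b h
    induction h with
    | refl => rfl
    | @tail x y _ hstep ih =>
      obtain ⟨e, he, ht⟩ := hstep
      obtain ⟨u, hu⟩ := hsurj e he
      have htu := hedge_touch u.1 u.2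
      rw [hu] at htu
      have hkey : par'^[d u.1] u.1 = par'^[d (par u.1 u.2)] (par u.1 u.2) := by
        have h := hroot_step u.1 u.2
        rwa [hpar'_eq u.1 u.2] at h
      refine ih.trans ?_
      rcases ht with h1 | h1 <;> rcases htu with h2 | h2 <;>
        (have h12 := h1.symm.trans h2; rw [Prod.mk.injEq] at h12)
      · rw [h12.1, h12.2]; exact hkey
      · rw [h12.1, h12.2]; exact hkey.symm
      · rw [h12.1, h12.2]; exact hkey.symm
      · rw [h12.1, h12.2]; exact hkey
  have hsep : ∀ u w, isBdry u → isBdry w → Reach ends S u w → u = w := by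
    intro u w hu hw h
    have h2 := hroot_reach u w h
    rwa [hiter_bdry (d u) u hu, hiter_bdry (d w) w hw] at h2
  refine ⟨⟨hcond, hsep, hcard⟩, ⟨Equiv.ofBijective σfun hσbij, ?_⟩⟩
  set N : Matrix {v : V // ¬ isBdry v} {v : V // ¬ isBdry v} R :=
    Matrix.of fun i j : {v : V // ¬ isBdry v} =>
      (incR ends ((Equiv.ofBijective σfun hσbij j) : E) i.1 : R) with hN
  have hNapp : ∀ i j, N i j = (incR ends (edge j.1 j.2) i.1 : R) := fun i j => rfl
  have hpar_ne : ∀ (j : {v : V // ¬ isBdry v}), j.1 ≠ par j.1 j.2 := by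
    intro j h
    have := hpar_lt j.1 j.2
    rw [← h] at this; omega
  have hNdiag : ∀ i, N i i * N i i = 1 := fun i =>
    incR_mul_self (hedge_touch i.1 i.2) (hpar_ne i)
  set b : {v : V // ¬ isBdry v} → ℕ ×ₗ ℕ :=
    fun i => toLex (d i.1, ((Fintype.equivFin {v : V // ¬ isBdry v}) i : ℕ)) with hb
  have hbinj : Function.Injective b := by
    intro i j h
    simp only [hb, toLex_inj, Prod.mk.injEq] at h
    exact (Fintype.equivFin _).injective (Fin.val_injective h.2)
  have hBT : N.BlockTriangular b := by
    intro i j hlt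
    by_contra h0
    rw [hNapp i j] at h0
    rcases incR_ne_zero h0 with h | h <;> rcases hedge_touch j.1 j.2 with h2 | h2 <;>
      rw [h2] at h
    · have hij : i = j := Subtype.ext h
      rw [hij] at hlt; exact lt_irrefl _ hlt
    · have hdlt : d i.1 < d j.1 := by
        rw [(h : i.1 = par j.1 j.2)]; exact hpar_lt j.1 j.2
      exact lt_asymm hlt (Prod.Lex.left _ _ hdlt)
    · have hdlt : d i.1 < d j.1 := by
        rw [(h : i.1 = par j.1 j.2)]; exact hpar_lt j.1 j.2
      exact lt_asymm hlt (Prod.Lex.left _ _ hdlt)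
    · have hij : i = j := Subtype.ext h
      rw [hij] at hlt; exact lt_irrefl _ hlt
  have hdetN : N.det = ∏ i, N i i := by
    rw [hBT.det, Finset.prod_image (fun i _ j _ h => hbinj h)]
    refine Finset.prod_congr rfl fun i _ => ?_
    haveI : Subsingleton {j // b j = b i} :=
      ⟨fun x y => Subtype.ext (hbinj (x.2.trans y.2.symm))⟩
    exact Matrix.det_eq_elem_of_subsingleton (N.toSquareBlock b (b i)) ⟨i, rfl⟩
  rw [hdetN, ← Finset.prod_mul_distrib]
  exact Finset.prod_eq_one fun i _ => hNdiag i

end MatrixForest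

open MatrixForest Finset in
theorem matrix_forest' {V E R : Type*} [Fintype V] [Fintype E] [CommRing R]
    (ends : E → V × V) (wt : E → R) (isBdry : V → Prop) :
    ∑ F ∈ Finset.univ.filter (IsSingletonGrove ends isBdry), ∏ e ∈ F, wt e =
      Matrix.det (Matrix.of fun i j : {v : V // ¬ isBdry v} =>
        kirchhoff ends wt i.1 j.1) := by
  classical
  set A : Matrix {v : V // ¬ isBdry v} E R := Matrix.of fun i e => wt e * incR ends e i.1 with hA
  set B : Matrix E {v : V // ¬ isBdry v} R := Matrix.of fun e j => incR ends e j.1 with hB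
  have hK : (Matrix.of fun i j : {v : V // ¬ isBdry v} => kirchhoff ends wt i.1 j.1) = A * B := by
    ext i j
    rw [Matrix.mul_apply, Matrix.of_apply, kirchhoff_eq_sum]
    exact Finset.sum_congr rfl fun e _ => by simp [hA, hB]; ring
  rw [hK, det_prod_expand A B]
  set T : ({v : V // ¬ isBdry v} → E) → R := fun p =>
    (∏ i, (incR ends (p i) i.1 : R)) * ((∏ i, wt (p i)) *
      (Matrix.of fun i j : {v : V // ¬ isBdry v} => (incR ends (p j) i.1 : R)).det) with hT
  have hsummand : ∀ p : {v : V // ¬ isBdry v} → E,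
      (∏ i, B (p i) i) * (A.submatrix id p).det = T p := by
    intro p
    have h2 : (A.submatrix id p).det = (∏ i, wt (p i)) *
        (Matrix.of fun i j : {v : V // ¬ isBdry v} => (incR ends (p j) i.1 : R)).det := by
      have h3 : A.submatrix id p = Matrix.of (fun i j : {v : V // ¬ isBdry v} =>
          wt (p j) * (Matrix.of fun i j : {v : V // ¬ isBdry v} =>
            (incR ends (p j) i.1 : R)) i j) := rfl
      rw [h3, Matrix.det_mul_row]
    rw [h2, hT]
    rfl
  rw [Finset.sum_congr rfl fun p _ => hsummand p]
  set P : ({v : V // ¬ isBdry v} → E) → Prop := fun p =>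
    Function.Injective p ∧ ∀ v : V, ∃ w, isBdry w ∧ Reach ends (Finset.univ.image p) v w with hP
  have hzero : ∀ p, ¬ P p → T p = 0 := by
    intro p hp
    by_cases hinj : Function.Injective p
    · have hc : ¬ ∀ v : V, ∃ w, isBdry w ∧ Reach ends (Finset.univ.image p) v w :=
        fun hc => hp ⟨hinj, hc⟩
      push_neg at hc
      obtain ⟨v₀, hv₀⟩ := hc
      have hd := det_zero_of_unreached (R := R) (Finset.univ.image p) p
        (fun j => Finset.mem_image_of_mem p (Finset.mem_univ j)) v₀
        (fun w hw hr => (hv₀ w hw) hr)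
      rw [hT]
      simp only [hd, mul_zero]
    · rw [Function.not_injective_iff] at hinj
      obtain ⟨a, b, hab, hne⟩ := hinj
      have hd : (Matrix.of fun i j : {v : V // ¬ isBdry v} =>
          (incR ends (p j) i.1 : R)).det = 0 :=
        Matrix.det_zero_of_column_eq hne (fun k => by simp [hab])
      rw [hT]
      simp only [hd, mul_zero]
  rw [← Finset.sum_filter_of_ne (fun p _ hTp => by_contra fun h => hTp (hzero p h))]
  have hmaps : ∀ p ∈ Finset.univ.filter P, Finset.univ.image p ∈
      Finset.univ.filter (IsSingletonGrove ends isBdry) := by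
    intro p hp
    rw [Finset.mem_filter] at hp ⊢
    refine ⟨Finset.mem_univ _, ?_⟩
    have hcard : (Finset.univ.image p).card = Fintype.card {v : V // ¬ isBdry v} := by
      rw [Finset.card_image_of_injective _ hp.2.1, Finset.card_univ]
    exact (grove_aux (R := R) (Finset.univ.image p) hcard hp.2.2).1
  rw [← Finset.sum_fiberwise_of_maps_to hmaps T]
  refine Finset.sum_congr rfl fun F hF => ?_
  rw [Finset.mem_filter] at hF
  obtain ⟨-, hg1, hg2, hg3⟩ := hF
  obtain ⟨-, σ, hσdet⟩ := grove_aux (R := R) F hg3 hg1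
  set NF : Matrix {v : V // ¬ isBdry v} {v : V // ¬ isBdry v} R :=
    Matrix.of fun i j => (incR ends ((σ j) : E) i.1 : R) with hNF
  have hgF : ∀ π : Equiv.Perm {v : V // ¬ isBdry v},
      Finset.univ.image (fun v => ((σ (π v)) : E)) = F := by
    intro π
    ext e
    simp only [Finset.mem_image, Finset.mem_univ, true_and]
    constructor
    · rintro ⟨v, rfl⟩; exact (σ (π v)).2
    · intro he
      exact ⟨π.symm (σ.symm ⟨e, he⟩), by simp⟩
  have key : ∑ p ∈ (Finset.univ.filter P).filter (fun p => Finset.univ.image p = F), T p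
      = ∑ π : Equiv.Perm {v : V // ¬ isBdry v}, T (fun v => ((σ (π v)) : E)) := by
    have hmemF : ∀ (p : {v : V // ¬ isBdry v} → E),
        p ∈ (Finset.univ.filter P).filter (fun p => Finset.univ.image p = F) →
        ∀ v, p v ∈ F := by
      intro p hp v
      rw [Finset.mem_filter] at hp
      rw [← hp.2]
      exact Finset.mem_image_of_mem p (Finset.mem_univ v)
    have hinjp : ∀ p, p ∈ (Finset.univ.filter P).filter (fun p => Finset.univ.image p = F) →
        Function.Injective p :=
      fun p hp => ((Finset.mem_filter.1 (Finset.mem_filter.1 hp).1).2).1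
    have hbij : ∀ p (hp : p ∈ (Finset.univ.filter P).filter
          (fun p => Finset.univ.image p = F)),
        Function.Bijective (fun v => σ.symm ⟨p v, hmemF p hp v⟩) := by
      intro p hp
      rw [← Finite.injective_iff_bijective]
      intro a b h
      exact hinjp p hp (congrArg Subtype.val (σ.symm.injective h))
    refine Finset.sum_bij' (fun p hp => Equiv.ofBijective _ (hbij p hp))
      (fun π _ => fun v => ((σ (π v)) : E)) (fun p hp => Finset.mem_univ _)
      ?_ ?_ ?_ ?_
    · intro π _
      rw [Finset.mem_filter]
      refine ⟨Finset.mem_filter.2 ⟨Finset.mem_univ _, ?_, ?_⟩, hgF π⟩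
      · intro a b h
        exact π.injective (σ.injective (Subtype.ext h))
      · rw [hgF π]; exact hg1
    · intro p hp
      funext v
      show ((σ (σ.symm ⟨p v, hmemF p hp v⟩)) : E) = p v
      rw [Equiv.apply_symm_apply]
    · intro π _
      refine Equiv.ext fun v => ?_
      simp only [Equiv.ofBijective_apply]
      apply σ.injective
      rw [Equiv.apply_symm_apply]
    · intro p hp
      congr 1
      funext v
      show p v = ((σ (σ.symm ⟨p v, hmemF p hp v⟩)) : E)
      rw [Equiv.apply_symm_apply]
  have hwt : ∀ π : Equiv.Perm {v : V // ¬ isBdry v},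
      (∏ i, wt ((σ (π i)) : E)) = ∏ e ∈ F, wt e := by
    intro π
    rw [← Finset.prod_coe_sort F wt]
    exact Equiv.prod_comp (π.trans σ) (fun s => wt s.1)
  have hdetp : ∀ π : Equiv.Perm {v : V // ¬ isBdry v},
      (Matrix.of fun i j : {v : V // ¬ isBdry v} =>
        (incR ends ((σ (π j)) : E) i.1 : R)).det
      = ((Equiv.Perm.sign π : ℤ) : R) * NF.det := by
    intro π
    have h5 : (Matrix.of fun i j : {v : V // ¬ isBdry v} =>
        (incR ends ((σ (π j)) : E) i.1 : R)) = NF.submatrix id π := rfl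
    rw [h5, Matrix.det_permute']
  have hsign : (∑ π : Equiv.Perm {v : V // ¬ isBdry v},
      ((Equiv.Perm.sign π : ℤ) : R) * ∏ i, NF i (π i)) = NF.det := by
    rw [← Matrix.det_transpose NF, Matrix.det_apply']
    simp only [Matrix.transpose_apply]
  rw [key]
  symm
  calc ∑ π : Equiv.Perm {v : V // ¬ isBdry v}, T (fun v => ((σ (π v)) : E))
      = ∑ π : Equiv.Perm {v : V // ¬ isBdry v},
        (∏ e ∈ F, wt e) * ((((Equiv.Perm.sign π : ℤ) : R) * ∏ i, NF i (π i)) * NF.det) := by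
        refine Finset.sum_congr rfl fun π _ => ?_
        simp only [hT]
        rw [hwt π, hdetp π]
        have h6 : (∏ i, (incR ends ((σ (π i)) : E) i.1 : R)) = ∏ i, NF i (π i) := rfl
        rw [h6]
        ring
    _ = (∏ e ∈ F, wt e) * ((∑ π : Equiv.Perm {v : V // ¬ isBdry v},
          ((Equiv.Perm.sign π : ℤ) : R) * ∏ i, NF i (π i)) * NF.det) := by
        rw [← Finset.mul_sum, ← Finset.sum_mul]
    _ = (∏ e ∈ F, wt e) * (NF.det * NF.det) := by rw [hsign]
    _ = ∏ e ∈ F, wt e := by rw [hσdet, mul_one]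

/-- **Matrix-forest theorem.**  For a finite weighted undirected graph with a partition of
its vertices into boundary and interior vertices such that every connected component
contains a boundary vertex, the weighted sum over spanning forests in which each tree
contains exactly one boundary vertex equals the determinant of the Kirchhoff matrix
restricted to the interior vertices. -/
theorem matrix_forest {V E R : Type*} [Fintype V] [Fintype E] [CommRing R]
    (ends : E → V × V) (wt : E → R) (isBdry : V → Prop)
    (hconn : ∀ v : V, ∃ w, isBdry w ∧ Reach ends Finset.univ v w) :
    ∑ F ∈ Finset.univ.filter (IsSingletonGrove ends isBdry), ∏ e ∈ F, wt e =
      Matrix.det (Matrix.of fun i j : {v : V // ¬ isBdry v} =>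
        kirchhoff ends wt i.1 j.1) := by
  exact matrix_forest' ends wt isBdry
end

section
/- Let M be an n×m matrix over a commutative ring, A = {1,…,n} indexing rows, and suppose the columns are indexed by a totally ordered set V ⊇ A such that the column indexed by each a ∈ A is the standard basis vector e_a. Let a = (a₁,…,a_k) be a tuple of distinct elements of A and b = (b₁,…,b_k) a tuple of distinct elements of V∖A. Then det((M_{a_i,b_j})_{i,j=1}^k) = sgn(a,b) · det(M restricted to all rows and the columns indexed by V' := {b₁,…,b_k} ∪ (A∖{a₁,…,a_k})), where sgn(a,b) = (−1)^{(number of inversions in the concatenation a⌢(A∖a)) + (number of inversions in b⌢(A∖a))}. -/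
/-!
Extend the row tuple `a` by the increasing enumeration `c` of the remaining rows, and the column
tuple `b` by the unit columns of those rows. The resulting square minor has block form
`[[M_ab, 0], [*, 1]]`, so its determinant is `det M_ab`; on the other hand it arises from the
submatrix on the columns `V'` by permuting rows and columns, and the sign of a permutation of
`Fin n` is `(-1)` to the number of its inversions.
-/

open scoped Classical

/-- The number of inversions of a list with entries in a linear order: pairs of positions
`i < j` whose entries are out of order. -/
def inversions {V : Type*} [LinearOrder V] (l : List V) : ℕ :=
  (Finset.univ.filter (fun p : Fin l.length × Fin l.length =>
    p.1 < p.2 ∧ l.get p.2 < l.get p.1)).card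

open Finset Equiv

theorem inversions_ofFn {V : Type*} [LinearOrder V] {n : ℕ} (f : Fin n → V) :
    inversions (List.ofFn f) = #{p : Fin n × Fin n | p.1 < p.2 ∧ f p.2 < f p.1} := by
  have h : (List.ofFn f).length = n := List.length_ofFn
  refine card_nbij' (Prod.map (Fin.cast h) (Fin.cast h))
    (Prod.map (Fin.cast h.symm) (Fin.cast h.symm)) ?_ ?_ (fun _ _ => rfl) (fun _ _ => rfl) <;>
  · intro p hp
    simp only [coe_filter, Set.mem_ofPred_eq, mem_univ, true_and, List.get_ofFn] at hp ⊢
    exact hp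

theorem inversions_ofFn_comp {V W : Type*} [LinearOrder V] [LinearOrder W] {e : V → W}
    (he : StrictMono e) {n : ℕ} (f : Fin n → V) :
    inversions (List.ofFn (e ∘ f)) = inversions (List.ofFn f) := by
  simp only [inversions_ofFn, Function.comp_apply, he.lt_iff_lt]

theorem Equiv.Perm.signAux_eq_sign {n : ℕ} (σ : Perm (Fin n)) : Perm.signAux σ = Perm.sign σ := by
  induction σ using Perm.swap_induction_on with
  | one => simp
  | swap_mul σ x y hxy ih =>
    rw [Perm.signAux_mul, Perm.sign_mul, Perm.signAux_swap hxy, Perm.sign_swap hxy, ih]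

theorem Equiv.Perm.sign_eq_neg_one_pow_inversions {n : ℕ} (σ : Perm (Fin n)) :
    Perm.sign σ = (-1) ^ inversions (List.ofFn σ) := by
  rw [← Perm.signAux_eq_sign, Perm.signAux, prod_ite, prod_const, prod_const, one_pow, mul_one,
    inversions_ofFn]
  congr 1
  -- `signAux` counts pairs `x₂ < x₁` with `σ x₁ ≤ σ x₂`; swapping coordinates gives inversions.
  refine card_nbij' (fun x => (x.2, x.1)) (fun p => ⟨p.2, p.1⟩) ?_ ?_ (fun _ _ => rfl)
    (fun _ _ => rfl)
  · intro x hx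
    simp only [coe_filter, Perm.mem_finPairsLT, Set.mem_ofPred_eq, mem_univ, true_and] at hx ⊢
    exact ⟨hx.1, hx.2.lt_of_ne fun h => hx.1.ne' (σ.injective h)⟩
  · intro p hp
    simp only [coe_filter, Perm.mem_finPairsLT, Set.mem_ofPred_eq, mem_univ, true_and] at hp ⊢
    exact ⟨hp.1, hp.2.le⟩

namespace Matrix

variable {R : Type*} [CommRing R] {n : ℕ}

theorem det_submatrix_of_injective_row (M : Matrix (Fin n) (Fin n) R) {f : Fin n → Fin n}
    (hf : Function.Injective f) :
    (M.submatrix f id).det = (-1) ^ inversions (List.ofFn f) * M.det := by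
  have := det_permute (Equiv.ofBijective f hf.bijective_of_finite) M
  rw [Perm.sign_eq_neg_one_pow_inversions] at this
  simpa using this

theorem det_submatrix_of_injective_col {W : Type*} [LinearOrder W] (M : Matrix (Fin n) W R)
    (S : Finset W) (hS : S.card = n) {g : Fin n → W} (hg : Function.Injective g)
    (hgS : ∀ j, g j ∈ S) :
    (M.submatrix id g).det =
      (-1) ^ inversions (List.ofFn g) * (M.submatrix id (S.orderEmbOfFin hS)).det := by
  have hinj : Function.Injective fun j => (S.orderIsoOfFin hS).symm ⟨g j, hgS j⟩ :=
    (S.orderIsoOfFin hS).symm.injective.comp fun i j h => hg (congrArg Subtype.val h)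
  let σ : Perm (Fin n) := Equiv.ofBijective _ hinj.bijective_of_finite
  have hgσ : g = S.orderEmbOfFin hS ∘ σ := by
    ext j
    simp [σ, ← coe_orderIsoOfFin_apply]
  have := det_permute' σ (M.submatrix id (S.orderEmbOfFin hS))
  rw [Perm.sign_eq_neg_one_pow_inversions] at this
  rw [hgσ, inversions_ofFn_comp (S.orderEmbOfFin hS).strictMono]
  simpa using this

theorem det_submatrix_of_injective {W : Type*} [LinearOrder W] (M : Matrix (Fin n) W R)
    (S : Finset W) (hS : S.card = n) {f : Fin n → Fin n} (hf : Function.Injective f)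
    {g : Fin n → W} (hg : Function.Injective g) (hgS : ∀ j, g j ∈ S) :
    (M.submatrix f g).det = (-1) ^ (inversions (List.ofFn f) + inversions (List.ofFn g)) *
      (M.submatrix id (S.orderEmbOfFin hS)).det := by
  calc (M.submatrix f g).det = ((M.submatrix f id).submatrix id g).det := rfl
    _ = (-1) ^ inversions (List.ofFn g) *
          ((M.submatrix id (S.orderEmbOfFin hS)).submatrix f id).det :=
        det_submatrix_of_injective_col _ S hS hg hgS
    _ = _ := by
        rw [det_submatrix_of_injective_row _ hf, pow_add]
        ring

theorem det_submatrix_append_zero₁₂_one₂₂ {ι κ : Type*} {k r : ℕ} (M : Matrix ι κ R)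
    (a : Fin k → ι) (c : Fin r → ι) (b : Fin k → κ) (d : Fin r → κ)
    (hzero : ∀ i j, M (a i) (d j) = 0) (hone : ∀ i j, M (c i) (d j) = if i = j then 1 else 0) :
    (M.submatrix (Fin.append a c) (Fin.append b d)).det = (M.submatrix a b).det := by
  have hblocks : (M.submatrix (Fin.append a c) (Fin.append b d)).submatrix finSumFinEquiv
      finSumFinEquiv = fromBlocks (M.submatrix a b) 0 (M.submatrix c b) 1 := by
    ext (i | i) (j | j) <;> simp [hzero, hone, one_apply]
  rw [← det_submatrix_equiv_self finSumFinEquiv, hblocks, det_fromBlocks_zero₁₂, det_one, mul_one]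

theorem det_submatrix_append_unit_columns {W : Type*} {k r : ℕ} (M : Matrix (Fin (k + r)) W R)
    {e : Fin (k + r) → W} (hM : ∀ i j, M j (e i) = if j = i then 1 else 0)
    {a : Fin k → Fin (k + r)} {c : Fin r → Fin (k + r)} (hc : Function.Injective c)
    (hac : ∀ i j, a i ≠ c j) (b : Fin k → W) :
    (M.submatrix (Fin.append a c) (Fin.append b (e ∘ c))).det = (M.submatrix a b).det :=
  det_submatrix_append_zero₁₂_one₂₂ M a c b (e ∘ c) (fun i j => by simp [hM, hac])
    fun i j => by simp [hM, hc.eq_iff]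

end Matrix

theorem Fin.exists_strictMono_range_eq_compl {k r : ℕ} {a : Fin k → Fin (k + r)}
    (ha : Function.Injective a) :
    ∃ c : Fin r → Fin (k + r), StrictMono c ∧ Set.range c = (Set.range a)ᶜ := by
  have hcard : (univ \ image a univ).card = r := by
    rw [card_sdiff_of_subset (subset_univ _), card_image_of_injective _ ha]
    simp
  refine ⟨(univ \ image a univ).orderEmbOfFin hcard, OrderEmbedding.strictMono _, ?_⟩
  ext x
  simp

theorem Finset.ofFn_orderEmbOfFin_comp_eq_sort_sdiff {V : Type*} [LinearOrder V] (A : Finset V)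
    {k r : ℕ} (hA : A.card = k + r) (a : Fin k → Fin (k + r)) {c : Fin r → Fin (k + r)}
    (hc : StrictMono c) (hac : Set.range c = (Set.range a)ᶜ) :
    List.ofFn (A.orderEmbOfFin hA ∘ c) =
      (A \ image (fun i => (A.orderIsoOfFin hA (a i) : V)) univ).sort (· ≤ ·) := by
  refine ((A.orderEmbOfFin hA).strictMono.comp hc).sortedLT_ofFn.eq_of_mem_iff
    (sortedLT_sort _) fun x => ?_
  have hx : x ∈ A ↔ x ∈ Set.range (A.orderEmbOfFin hA) := by rw [range_orderEmbOfFin]; rfl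
  simp only [List.mem_ofFn, mem_sort, mem_sdiff, hx, mem_image, mem_univ, true_and,
    coe_orderIsoOfFin_apply]
  have hmem (y : Fin (k + r)) : y ∈ Set.range c ↔ y ∉ Set.range a := by rw [hac]; rfl
  constructor
  · rintro ⟨j, rfl⟩
    exact ⟨⟨c j, rfl⟩, fun ⟨i, hi⟩ =>
      (hmem (c j)).1 ⟨j, rfl⟩ ⟨i, (A.orderEmbOfFin hA).injective hi⟩⟩
  · rintro ⟨⟨y, rfl⟩, hy⟩
    obtain ⟨j, rfl⟩ := (hmem y).2 fun ⟨i, hi⟩ => hy ⟨i, congrArg _ hi⟩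
    exact ⟨j, rfl⟩

/-- **Signed minor identity.**  Let `M` be an `m × V` matrix whose rows are indexed by a
totally ordered set `A ⊆ V` of size `m` (identified with `Fin m` via the order
isomorphism `α`), such that the column of `M` at each element of `A` is the corresponding
standard basis vector.  For tuples `a` of distinct elements of `A` (as row indices) and
`b` of distinct elements of `V ∖ A`,
`det (M (a i) (b j)) = sgn(a,b) · det (M restricted to the columns V' = b-image ∪ (A ∖ a-image), listed in increasing order)`,
where `sgn(a,b) = (−1)^{inv(a ⌢ (A∖a)) + inv(b ⌢ (A∖a))}`. -/
theorem signed_minor {V R : Type*} [Fintype V] [LinearOrder V] [CommRing R]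
    {m : ℕ} (A : Finset V) (hA : A.card = m)
    (M : Matrix (Fin m) V R)
    (hcol : ∀ i j : Fin m, M j ((A.orderIsoOfFin hA i : V)) = if j = i then 1 else 0)
    {k : ℕ} (a : Fin k → Fin m) (ha : Function.Injective a)
    (b : Fin k → V) (hb : Function.Injective b) (hbA : ∀ i, b i ∉ A)
    (V' : Finset V)
    (hV'def : V' = Finset.image b Finset.univ ∪
      (A \ Finset.image (fun i => (A.orderIsoOfFin hA (a i) : V)) Finset.univ))
    (hV' : V'.card = m) :
    Matrix.det (Matrix.of fun i j : Fin k => M (a i) (b j)) =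
      ((-1 : R) ^
        (inversions ((List.ofFn (fun i => (A.orderIsoOfFin hA (a i) : V))) ++
            Finset.sort
              (A \ Finset.image (fun i => (A.orderIsoOfFin hA (a i) : V)) Finset.univ) (· ≤ ·)) +
         inversions ((List.ofFn b) ++
            Finset.sort
              (A \ Finset.image (fun i => (A.orderIsoOfFin hA (a i) : V)) Finset.univ) (· ≤ ·)))) *
        Matrix.det (Matrix.of fun i j : Fin m => M i ((V'.orderIsoOfFin hV' j : V))) := by
  obtain ⟨r, rfl⟩ : ∃ r, m = k + r :=
    Nat.exists_eq_add_of_le (by simpa using Fintype.card_le_of_injective a ha)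
  set Ac := A \ image (fun i => (A.orderIsoOfFin hA (a i) : V)) univ
  obtain ⟨c, hc, hac⟩ := Fin.exists_strictMono_range_eq_compl ha
  have hsort : List.ofFn (A.orderEmbOfFin hA ∘ c) = Ac.sort (· ≤ ·) :=
    A.ofFn_orderEmbOfFin_comp_eq_sort_sdiff hA a hc hac
  set α := A.orderEmbOfFin hA
  have hAc (j) : α (c j) ∈ Ac := by
    rw [← mem_sort (· ≤ ·), ← hsort, List.mem_ofFn]
    exact ⟨j, rfl⟩
  have ha_ne_c (i j) : a i ≠ c j := fun h => (Set.ext_iff.1 hac (c j)).1 ⟨j, rfl⟩ ⟨i, h⟩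
  have hrows : Function.Injective (Fin.append a c) :=
    Fin.append_injective_iff.2 ⟨ha, hc.injective, ha_ne_c⟩
  have hcols : Function.Injective (Fin.append b (α ∘ c)) :=
    Fin.append_injective_iff.2 ⟨hb, α.injective.comp hc.injective,
      fun i j h => hbA i (h ▸ (mem_sdiff.1 (hAc j)).1)⟩
  have hcolsV' (j) : Fin.append b (α ∘ c) j ∈ V' := by
    refine Fin.addCases (fun j => ?_) (fun j => ?_) j
    · rw [Fin.append_left, hV'def]
      exact mem_union_left _ (mem_image_of_mem b (mem_univ j))
    · rw [Fin.append_right, hV'def]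
      exact mem_union_right _ (hAc j)
  have hrow_signs : inversions (List.ofFn (Fin.append a c)) =
      inversions (List.ofFn (fun i => (A.orderIsoOfFin hA (a i) : V)) ++ Ac.sort (· ≤ ·)) := by
    rw [← inversions_ofFn_comp α.strictMono, ← List.map_ofFn, List.ofFn_fin_append,
      List.map_append, List.map_ofFn, List.map_ofFn, hsort]
    rfl
  calc (M.submatrix a b).det
      = (M.submatrix (Fin.append a c) (Fin.append b (α ∘ c))).det :=
        (M.det_submatrix_append_unit_columns hcol hc.injective ha_ne_c b).symm
    _ = _ := by
        rw [M.det_submatrix_of_injective V' hV' hrows hcols hcolsV', hrow_signs,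
          List.ofFn_fin_append, hsort]
        rfl
end
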